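/- arXiv:1608.05552 — 3 statements merged into one kernel-verified Lean document; each statement's English description precedes it below -/
import Mathlib

section
/- Let f be a Boolean network of dimension n. If x and y are two distinct fixed points of f, then the interaction graph G(f) contains a positive cycle C such that x_v ≠ y_v for every vertex v of C. -/
/-!
Let `D` be the set of vertices where `x` and `y` differ. For `v ∈ D` we have
`f x v = x v ≠ y v = f y v`, so flipping the coordinates of `x` in `D` one at a time towards `y`
must change `f_v` at some flip of a vertex `u ∈ D`; this is an edge `u → v` of `G(f)`, positive iff
`x u = x v`. Every vertex of `D` thus has an in-neighbour in `D`, and following in-neighbours inside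
the finite set `D` closes up a cycle. Its negative edges are exactly the places where `x` changes
value along the cycle, so there is an even number of them.
-/

/-- Asynchronous transition: update one vertex `u` where `f` disagrees with `x`. -/
def AsyncStep {n : ℕ} (f : (Fin n → Bool) → (Fin n → Bool)) (x z : Fin n → Bool) : Prop :=
  ∃ u : Fin n, f x u ≠ x u ∧ z = Function.update x u (f x u)

/-- Reachability: reflexive-transitive closure of the asynchronous transition relation. -/
def Reach {n : ℕ} (f : (Fin n → Bool) → (Fin n → Bool)) :
    (Fin n → Bool) → (Fin n → Bool) → Prop :=
  Relation.ReflTransGen (AsyncStep f)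

/-- An attractor: nonempty, closed under transitions, strongly connected for reachability. -/
def IsAttractor {n : ℕ} (f : (Fin n → Bool) → (Fin n → Bool)) (S : Set (Fin n → Bool)) : Prop :=
  S.Nonempty ∧ (∀ x ∈ S, ∀ z, AsyncStep f x z → z ∈ S) ∧ (∀ x ∈ S, ∀ z ∈ S, Reach f x z)

/-- Positive edge of the interaction graph `G(f)`. -/
def PosEdge {n : ℕ} (f : (Fin n → Bool) → (Fin n → Bool)) (u v : Fin n) : Prop :=
  ∃ x : Fin n → Bool,
    f (Function.update x u true) v = true ∧ f (Function.update x u false) v = false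

/-- Negative edge of the interaction graph `G(f)`. -/
def NegEdge {n : ℕ} (f : (Fin n → Bool) → (Fin n → Bool)) (u v : Fin n) : Prop :=
  ∃ x : Fin n → Bool,
    f (Function.update x u true) v = false ∧ f (Function.update x u false) v = true

/-- Signed edge (`true` = positive, `false` = negative). -/
def SignedEdge {n : ℕ} (f : (Fin n → Bool) → (Fin n → Bool)) (u v : Fin n) (s : Bool) : Prop :=
  match s with
  | true => PosEdge f u v
  | false => NegEdge f u v

/-- A cycle of `G(f)`: a nonempty list of signed edges, consecutively chained,
the last edge returning to the source of the first. -/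
def IsCycle {n : ℕ} (f : (Fin n → Bool) → (Fin n → Bool))
    (es : List (Fin n × Fin n × Bool)) : Prop :=
  es ≠ [] ∧ (∀ e ∈ es, SignedEdge f e.1 e.2.1 e.2.2) ∧
  es.Chain' (fun e e' => e.2.1 = e'.1) ∧
  es.getLast?.map (fun e => e.2.1) = es.head?.map (fun e => e.1)

/-- A positive cycle: a cycle traversing an even number of negative edges. -/
def IsPosCycle {n : ℕ} (f : (Fin n → Bool) → (Fin n → Bool))
    (es : List (Fin n × Fin n × Bool)) : Prop :=
  IsCycle f es ∧ Even (es.countP (fun e => !e.2.2))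

/-- Unsigned edge of the interaction graph. -/
def EdgeU {n : ℕ} (f : (Fin n → Bool) → (Fin n → Bool)) (u v : Fin n) : Prop :=
  PosEdge f u v ∨ NegEdge f u v

/-- `v` is an ancestor of `u`: nonempty directed path from `v` to `u` in `G(f)`. -/
def Ancestor {n : ℕ} (f : (Fin n → Bool) → (Fin n → Bool)) (v u : Fin n) : Prop :=
  Relation.TransGen (EdgeU f) v u

/-- `u` and `v` are in the same strongly connected component of (the unsigned) `G(f)`. -/
def SameSCC {n : ℕ} (f : (Fin n → Bool) → (Fin n → Bool)) (u v : Fin n) : Prop :=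
  Relation.ReflTransGen (EdgeU f) u v ∧ Relation.ReflTransGen (EdgeU f) v u

/-- `u` belongs to an SCC of `G(f)` containing a positive cycle. -/
def InPosSCC {n : ℕ} (f : (Fin n → Bool) → (Fin n → Bool)) (u : Fin n) : Prop :=
  ∃ es, IsPosCycle f es ∧ ∀ v ∈ es.map Prod.fst, SameSCC f v u

open Classical in
/-- The modified network `f[I←y]`. -/
noncomputable def modifyBN {n : ℕ} (f : (Fin n → Bool) → (Fin n → Bool)) (I : Set (Fin n))
    (y : Fin n → Bool) : (Fin n → Bool) → (Fin n → Bool) :=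
  fun x i => if i ∈ I then y i else f x i

open Classical in
/-- The state `x_{[x_I = y_I]}`: equal to `y` on `I`, to `x` elsewhere. -/
noncomputable def patchState {n : ℕ} (x : Fin n → Bool) (I : Set (Fin n)) (y : Fin n → Bool) :
    Fin n → Bool :=
  fun i => if i ∈ I then y i else x i

open Function

theorem Finite.exists_iterate_succ_apply_eq {α : Type*} [Finite α] [Nonempty α] (g : α → α) :
    ∃ a k, g^[k + 1] a = a := by
  obtain ⟨i, j, hij, heq⟩ :=
    Finite.exists_ne_map_eq_of_infinite fun i : ℕ => g^[i] (Classical.arbitrary α)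
  rcases Nat.lt_or_gt_of_ne hij with h | h
  · refine ⟨g^[i] (Classical.arbitrary α), j - i - 1, ?_⟩
    rw [← iterate_add_apply, show j - i - 1 + 1 + i = j by omega, heq]
  · refine ⟨g^[j] (Classical.arbitrary α), i - j - 1, ?_⟩
    rw [← iterate_add_apply, show i - j - 1 + 1 + j = i by omega, heq]

theorem even_countP_range_bne_iff (c : ℕ → Bool) (k : ℕ) :
    Even ((List.range k).countP fun m => c m != c (m + 1)) ↔ c 0 = c k := by
  induction k with
  | zero => simp
  | succ k ih =>
    rw [List.range_succ, List.countP_append, Nat.even_add, ih]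
    cases c 0 <;> cases hk : c k <;> cases hk1 : c (k + 1) <;> simp [hk, hk1]

section InteractionGraph

variable {n : ℕ} (f : (Fin n → Bool) → (Fin n → Bool))

theorem signedEdge_of_apply_update_ne {x : Fin n → Bool} {u v : Fin n} {b : Bool}
    (h : f (update x u b) v ≠ f x v) : SignedEdge f u v (f x v == x u) := by
  obtain rfl : b = !x u := by
    cases hxu : x u <;> cases b <;> simp_all [← hxu]
  have hself := update_eq_self u x
  cases hxu : x u <;> cases hfx : f x v <;> simp only [hxu, hfx] at h hself ⊢ <;>
    exact ⟨x, by first | simpa using h | rw [hself, hfx],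
      by first | simpa using h | rw [hself, hfx]⟩

theorem exists_signedEdge_of_apply_ne {a b : Fin n → Bool} {v : Fin n} (h : f a v ≠ f b v) :
    ∃ u, a u ≠ b u ∧ SignedEdge f u v (f a v == a u) := by
  classical
  suffices key : ∀ s : Finset (Fin n), f a v ≠ f (s.piecewise b a) v →
      ∃ u, a u ≠ b u ∧ SignedEdge f u v (f a v == a u) from
    key Finset.univ (by rwa [Finset.piecewise_univ])
  intro s
  induction s using Finset.induction_on with
  | empty => simp
  | insert u s hu ih =>
    intro hne
    by_cases hs : f a v = f (s.piecewise b a) v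
    · have hflip : f (update (s.piecewise b a) u (b u)) v ≠ f (s.piecewise b a) v := by
        rwa [← Finset.piecewise_insert, ← hs, ne_comm]
      have hau : s.piecewise b a u = a u := Finset.piecewise_eq_of_notMem _ _ _ hu
      refine ⟨u, fun hab => hflip ?_, ?_⟩
      · rw [← hab, ← hau, update_eq_self]
      · simpa only [hau, hs] using signedEdge_of_apply_update_ne f hflip
    · exact ih hs

/-- The closed walk `W (k + 1) → W k → ⋯ → W 0` as a list of signed edges, an edge being positive
iff `σ` takes the same value at its two ends. -/
def backwardCycle (W : ℕ → Fin n) (σ : Fin n → Bool) (k : ℕ) : List (Fin n × Fin n × Bool) :=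
  (List.range (k + 1)).reverse.map fun m => (W (m + 1), W m, σ (W m) == σ (W (m + 1)))

variable {f} {W : ℕ → Fin n} {σ : Fin n → Bool} {k : ℕ}

theorem isPosCycle_backwardCycle (hclosed : W (k + 1) = W 0)
    (hedge : ∀ m, SignedEdge f (W (m + 1)) (W m) (σ (W m) == σ (W (m + 1)))) :
    IsPosCycle f (backwardCycle W σ k) := by
  refine ⟨⟨by simp [backwardCycle], ?_, ?_, ?_⟩, ?_⟩
  · simp only [backwardCycle, List.mem_map]
    rintro _ ⟨m, -, rfl⟩
    exact hedge m
  · rw [backwardCycle, List.Chain', List.isChain_map, List.isChain_reverse, List.isChain_range_succ]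
    intro m _
    rfl
  · simp [backwardCycle, List.getLast?_range, List.head?_range, hclosed]
  · rw [backwardCycle, List.countP_map, List.countP_reverse]
    exact (even_countP_range_bne_iff (σ ∘ W) (k + 1)).2 (congrArg σ hclosed.symm)

theorem exists_isPosCycle_of_forall_exists_signedEdge (σ : Fin n → Bool) {D : Set (Fin n)}
    (hD : D.Nonempty) (hpred : ∀ v ∈ D, ∃ u ∈ D, SignedEdge f u v (σ v == σ u)) :
    ∃ es, IsPosCycle f es ∧ ∀ v ∈ es.map Prod.fst, v ∈ D := by
  choose pred hpred using fun v : D => hpred v v.2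
  let step : D → D := fun v => ⟨pred v, (hpred v).1⟩
  have := hD.to_subtype
  obtain ⟨p, k, hp⟩ := Finite.exists_iterate_succ_apply_eq step
  refine ⟨backwardCycle (fun m => (step^[m] p : Fin n)) σ k,
    isPosCycle_backwardCycle (congrArg _ hp) fun m => ?_, ?_⟩
  · rw [iterate_succ_apply']
    exact (hpred _).2
  · simp [backwardCycle]

end InteractionGraph

/-- Two distinct fixed points differ on the vertices of some positive cycle. -/
theorem stmt1 {n : ℕ} (f : (Fin n → Bool) → (Fin n → Bool)) (x y : Fin n → Bool)
    (hx : f x = x) (hy : f y = y) (hxy : x ≠ y) :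
    ∃ es, IsPosCycle f es ∧ ∀ v ∈ es.map Prod.fst, x v ≠ y v := by
  refine exists_isPosCycle_of_forall_exists_signedEdge x (D := {v | x v ≠ y v})
    (Function.ne_iff.mp hxy) fun v hv => ?_
  obtain ⟨u, hu, huv⟩ :=
    exists_signedEdge_of_apply_ne f (a := x) (b := y) (v := v) (by rwa [hx, hy])
  exact ⟨u, hu, by rwa [hx] at huv⟩
end

section
/- Let f be a Boolean network of dimension n, y a fixed point of f, and u a vertex that does not lie on any positive cycle of the interaction graph G(f). If z is a state such that z_v = y_v for every vertex v in P_u \ {u}, then f_u(z) = y_u. -/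
open Function

/-
The value f_u(x) depends only on the coordinates x_v with an edge v → u, so setting
z_u := y_u in z gives a state agreeing with y on all in-neighbours of u other than u itself, and
f_u of it equals f_u(y) = y_u. If moreover z_u ≠ y_u and f_u(z) ≠ y_u, then f_u copies its own
argument, which is a positive self-loop at u: a positive cycle of length one.
-/

section InteractionGraph

variable {n : ℕ} {f : (Fin n → Bool) → (Fin n → Bool)}

lemma edgeU_of_apply_update_true_ne_false {x : Fin n → Bool} {w u : Fin n}
    (h : f (update x w true) u ≠ f (update x w false) u) : EdgeU f w u := by
  cases ht : f (update x w true) u <;> cases hf : f (update x w false) u <;> rw [ht, hf] at h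
  · exact absurd rfl h
  · exact .inr ⟨x, ht, hf⟩
  · exact .inl ⟨x, ht, hf⟩
  · exact absurd rfl h

lemma edgeU_of_apply_ne_apply_update {x : Fin n → Bool} {w u : Fin n} {b : Bool}
    (h : f x u ≠ f (update x w b) u) : EdgeU f w u := by
  refine edgeU_of_apply_update_true_ne_false (x := x) fun heq => h ?_
  have key : ∀ c, f (update x w c) u = f (update x w true) u := by
    intro c; cases c
    · exact heq.symm
    · rfl
  have hx := key (x w)
  rw [update_eq_self] at hx
  rw [hx, key b]

lemma apply_eq_of_eq_off_of_not_edgeU (u : Fin n) (s : Finset (Fin n))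
    (hs : ∀ v ∈ s, ¬ EdgeU f v u) {x x' : Fin n → Bool} (hx : ∀ v ∉ s, x v = x' v) :
    f x u = f x' u := by
  classical
  induction s using Finset.induction_on generalizing x with
  | empty => rw [funext fun v => hx v (Finset.notMem_empty v)]
  | insert a s _ ih =>
    have hstep : f x u = f (update x a (x' a)) u := by
      by_contra hne
      exact hs a (Finset.mem_insert_self a s) (edgeU_of_apply_ne_apply_update hne)
    refine hstep.trans (ih (fun v hv => hs v (Finset.mem_insert_of_mem hv)) fun v hv => ?_)
    rcases eq_or_ne v a with rfl | hva
    · exact update_self v _ x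
    · rw [update_of_ne hva]
      exact hx v (by simp [hva, hv])

lemma apply_eq_of_eq_on_edgeU {x x' : Fin n → Bool} {u : Fin n}
    (h : ∀ v, EdgeU f v u → x v = x' v) : f x u = f x' u := by
  classical
  refine apply_eq_of_eq_off_of_not_edgeU u (Finset.univ.filter fun v => x v ≠ x' v) ?_ ?_
  · intro v hv hedge
    exact (Finset.mem_filter.mp hv).2 (h v hedge)
  · intro v hv
    simpa using hv

lemma IsPosCycle.singleton_of_posEdge {u : Fin n} (hp : PosEdge f u u) :
    IsPosCycle f [(u, u, true)] :=
  ⟨⟨by simp, fun e he => by rw [List.mem_singleton.mp he]; exact hp, List.isChain_singleton _, rfl⟩,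
    by simp⟩

lemma apply_eq_of_apply_update_eq {x : Fin n → Bool} {u : Fin n} {b : Bool}
    (hloop : ¬ PosEdge f u u) (hb : f (update x u b) u = b) : f x u = b := by
  by_contra hne
  have hxu : x u = !b := Bool.eq_not_of_ne fun h => hne (by subst h; rwa [update_eq_self] at hb)
  have hfx : f (update x u !b) u = !b := by
    rw [← hxu, update_eq_self, hxu]
    exact Bool.eq_not_of_ne hne
  apply hloop
  cases b
  · exact ⟨x, hfx, hb⟩
  · exact ⟨x, hb, hfx⟩

end InteractionGraph

/-- if `u` lies on no positive cycle and `z` agrees with the fixed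
point `y` on `P_u \\ {u}`, then `f_u(z) = y_u`. -/
theorem stmt4 {n : ℕ} (f : (Fin n → Bool) → (Fin n → Bool)) (y : Fin n → Bool)
    (hy : f y = y) (u : Fin n)
    (hu : ¬ ∃ es, IsPosCycle f es ∧ u ∈ es.map Prod.fst)
    (z : Fin n → Bool)
    (h : ∀ v : Fin n, Ancestor f v u → v ≠ u → z v = y v) :
    f z u = y u := by
  have hloop : ¬ PosEdge f u u := fun hp =>
    hu ⟨_, IsPosCycle.singleton_of_posEdge hp, List.mem_singleton_self u⟩
  refine apply_eq_of_apply_update_eq hloop ?_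
  calc f (update z u (y u)) u = f y u := apply_eq_of_eq_on_edgeU fun v hedge => by
        rcases eq_or_ne v u with rfl | hvu
        · exact update_self v _ z
        · rw [update_of_ne hvu]
          exact h v (.single hedge) hvu
    _ = y u := congrFun hy u
end

section
/- Let f be a Boolean network of dimension n, y a state, and I ⊆ Fin n a set of vertices containing every vertex that lies on some positive cycle of the interaction graph G(f). Then the interaction graph G(f[I←y]) of the modified network f[I←y] contains no positive cycle. -/
/-!
An edge of `G(f[I←y])` into a vertex of `I` is impossible, since the components in `I` are
constant; every other edge of `G(f[I←y])` is an edge of `G(f)` with the same sign. Hence a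
positive cycle of `G(f[I←y])` is a positive cycle of `G(f)` that avoids `I`, whereas `I` contains
all its vertices.
-/

section ModifiedNetwork

variable {n : ℕ} {f : (Fin n → Bool) → (Fin n → Bool)} {I : Set (Fin n)} {y x : Fin n → Bool}
  {u v i : Fin n} {s : Bool}

theorem signedEdge_iff :
    SignedEdge f u v s ↔
      ∃ x, f (Function.update x u true) v = s ∧ f (Function.update x u false) v = !s := by
  cases s <;> rfl

theorem modifyBN_apply_of_mem (hi : i ∈ I) : modifyBN f I y x i = y i := if_pos hi

theorem modifyBN_apply_of_notMem (hi : i ∉ I) : modifyBN f I y x i = f x i := if_neg hi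

theorem SignedEdge.target_notMem_of_modifyBN (h : SignedEdge (modifyBN f I y) u v s) :
    v ∉ I := by
  intro hv
  obtain ⟨x, htrue, hfalse⟩ := signedEdge_iff.1 h
  rw [modifyBN_apply_of_mem hv] at htrue hfalse
  rw [htrue] at hfalse
  exact Bool.eq_not_self s |>.1 hfalse

theorem SignedEdge.of_modifyBN (h : SignedEdge (modifyBN f I y) u v s) : SignedEdge f u v s := by
  obtain ⟨x, htrue, hfalse⟩ := signedEdge_iff.1 h
  rw [modifyBN_apply_of_notMem h.target_notMem_of_modifyBN] at htrue hfalse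
  exact signedEdge_iff.2 ⟨x, htrue, hfalse⟩

theorem IsPosCycle.of_modifyBN {es : List (Fin n × Fin n × Bool)}
    (h : IsPosCycle (modifyBN f I y) es) : IsPosCycle f es :=
  ⟨⟨h.1.1, fun e he => (h.1.2.1 e he).of_modifyBN, h.1.2.2⟩, h.2⟩

end ModifiedNetwork

theorem IsCycle.getLast_target_eq_head_source {n : ℕ} {f : (Fin n → Bool) → (Fin n → Bool)}
    {es : List (Fin n × Fin n × Bool)} (h : IsCycle f es) :
    (es.getLast h.1).2.1 = (es.head h.1).1 := by
  obtain ⟨hne, -, -, hclosed⟩ := h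
  rw [List.getLast?_eq_some_getLast hne, List.head?_eq_some_head hne] at hclosed
  exact Option.some.inj hclosed

/-- if `I` contains every vertex lying on some positive cycle of `G(f)`,
then `G(f[I←y])` has no positive cycle. -/
theorem stmt7 {n : ℕ} (f : (Fin n → Bool) → (Fin n → Bool)) (y : Fin n → Bool)
    (I : Set (Fin n))
    (hI : ∀ (u : Fin n) es, IsPosCycle f es → u ∈ es.map Prod.fst → u ∈ I) :
    ¬ ∃ es, IsPosCycle (modifyBN f I y) es := by
  rintro ⟨es, hpos⟩
  have hne : es ≠ [] := hpos.1.1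
  have hsource : (es.head hne).1 ∈ I :=
    hI _ es hpos.of_modifyBN (List.mem_map_of_mem (List.head_mem hne))
  have htarget : (es.getLast hne).2.1 ∉ I :=
    (hpos.1.2.1 _ (List.getLast_mem hne)).target_notMem_of_modifyBN
  exact htarget (hpos.1.getLast_target_eq_head_source ▸ hsource)
end
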